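/- arXiv:2110.04389 — 5 statements merged into one kernel-verified Lean document; each statement's English description precedes it below -/
import Mathlib

section
/- Let ‖·‖ be a norm on ℝⁿ with unit ball whose polar is B*, and let A : ℝⁿ → ℝ^{n'} be a surjective linear map with Moore-Penrose pseudoinverse A†. Then the factor-norm ‖y‖' = min{‖x‖ : Ax = y} on ℝ^{n'} satisfies ‖y‖' = max{((A†)ᵀ z)ᵀ y : z ∈ B* ∩ Im(Aᵀ)}; in particular the polar of the unit ball of ‖·‖' is the linear image of B* ∩ Im(Aᵀ) under (A†)ᵀ. -/
/-!
The factor norm `q y = inf {‖x‖ : A x = y}` is again a seminorm, so by Hahn–Banach every value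
`q y` is attained by a linear functional `g ≤ q`, and `q y` dominates `g y` for every such `g`.
The functionals `g = uᵀ` with `g ∘ A ≤ ‖·‖` are exactly those for which `z = Aᵀ u` lies in `B*`
(the polar of the unit ball consists of the functionals dominated by the norm). Finally
surjectivity and `A A† A = A` give `A A† = 1`, so `(A†ᵀ z)ᵀ y = uᵀ (A A† y) = uᵀ y = g y`.
-/

open Matrix Set

namespace Seminorm

variable {E F : Type*} [AddCommGroup E] [Module ℝ E] [AddCommGroup F] [Module ℝ F]

theorem forall_le_one_imp_le_one_iff_le (p : Seminorm ℝ E) (φ : Module.Dual ℝ E) :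
    (∀ x, p x ≤ 1 → φ x ≤ 1) ↔ ∀ x, φ x ≤ p x := by
  refine ⟨fun h x => le_of_forall_pos_le_add fun ε hε => ?_, fun h x hx => (h x).trans hx⟩
  have hpos : 0 < p x + ε := by positivity
  have hunit : p ((p x + ε)⁻¹ • x) ≤ 1 := by
    rw [map_smul_eq_mul, Real.norm_of_nonneg (inv_pos.mpr hpos).le, inv_mul_le_one₀ hpos]
    linarith
  have := h _ hunit
  rwa [map_smul, smul_eq_mul, inv_mul_le_one₀ hpos] at this

theorem exists_dual_eq_and_le (q : Seminorm ℝ F) (y : F) :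
    ∃ g : Module.Dual ℝ F, g y = q y ∧ ∀ w, g w ≤ q w := by
  rcases eq_or_ne y 0 with rfl | hy
  · exact ⟨0, by simp, fun w => by simp⟩
  -- the functional `c • y ↦ c * q y` on the line through `y`, extended by Hahn–Banach
  let φ : Module.Dual ℝ (ℝ ∙ y) := q y • (LinearEquiv.coord ℝ F y hy).toLinearMap
  have hφ : ∀ w, φ w ≤ q w := fun w => by
    calc φ w = LinearEquiv.coord ℝ F y hy w * q y := by simp [φ, mul_comm]
      _ ≤ |LinearEquiv.coord ℝ F y hy w| * q y := by gcongr; exact le_abs_self _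
      _ = q w := by rw [← Real.norm_eq_abs, ← map_smul_eq_mul, LinearEquiv.coord_apply_smul]
  obtain ⟨g, hgφ, hgq⟩ := φ.exists_extension_of_le_seminorm_real _ hφ
  refine ⟨g, ?_, fun w => (le_abs_self _).trans (hgq w)⟩
  simpa [φ, LinearEquiv.coord_self] using hgφ ⟨y, Submodule.mem_span_singleton_self y⟩

section Factor

variable (p : Seminorm ℝ E) {f : E →ₗ[ℝ] F}

theorem sInf_image_preimage_le (x : E) : sInf (p '' (f ⁻¹' {f x})) ≤ p x :=
  csInf_le ⟨0, by rintro _ ⟨x', -, rfl⟩; exact apply_nonneg p x'⟩ ⟨x, rfl, rfl⟩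

theorem le_sInf_image_preimage (hf : Function.Surjective f) {a : ℝ} {y : F}
    (h : ∀ x, f x = y → a ≤ p x) : a ≤ sInf (p '' (f ⁻¹' {y})) := by
  obtain ⟨x, rfl⟩ := hf y
  exact le_csInf ⟨p x, x, rfl, rfl⟩ fun _ ⟨x', hx', hr⟩ => hr ▸ h x' hx'

theorem sInf_image_preimage_add_le (hf : Function.Surjective f) (u v : F) :
    sInf (p '' (f ⁻¹' {u + v})) ≤ sInf (p '' (f ⁻¹' {u})) + sInf (p '' (f ⁻¹' {v})) := by
  have hpair : ∀ x₁, f x₁ = u → ∀ x₂, f x₂ = v → sInf (p '' (f ⁻¹' {u + v})) ≤ p x₁ + p x₂ :=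
    fun x₁ h₁ x₂ h₂ => calc
      _ ≤ p (x₁ + x₂) := by
        have h := p.sInf_image_preimage_le (f := f) (x₁ + x₂)
        rwa [map_add, h₁, h₂] at h
      _ ≤ p x₁ + p x₂ := map_add_le_add p x₁ x₂
  have hv : ∀ x₁, f x₁ = u → sInf (p '' (f ⁻¹' {u + v})) - p x₁ ≤ sInf (p '' (f ⁻¹' {v})) :=
    fun x₁ h₁ => p.le_sInf_image_preimage hf fun x₂ h₂ => by linarith [hpair x₁ h₁ x₂ h₂]
  have hu : sInf (p '' (f ⁻¹' {u + v})) - sInf (p '' (f ⁻¹' {v})) ≤ sInf (p '' (f ⁻¹' {u})) :=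
    p.le_sInf_image_preimage hf fun x₁ h₁ => by linarith [hv x₁ h₁]
  linarith

theorem sInf_image_preimage_smul_le (hf : Function.Surjective f) (r : ℝ) (y : F) :
    sInf (p '' (f ⁻¹' {r • y})) ≤ ‖r‖ * sInf (p '' (f ⁻¹' {y})) := by
  rcases eq_or_ne r 0 with rfl | hr
  · simpa using p.sInf_image_preimage_le (f := f) 0
  have hr' : 0 < ‖r‖ := norm_pos_iff.mpr hr
  rw [← div_le_iff₀' hr']
  refine p.le_sInf_image_preimage hf fun x hx => ?_
  have h := p.sInf_image_preimage_le (f := f) (r • x)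
  rw [map_smul, hx, map_smul_eq_mul] at h
  rwa [div_le_iff₀' hr']

theorem sInf_image_preimage_zero (hf : Function.Surjective f) : sInf (p '' (f ⁻¹' {0})) = 0 :=
  le_antisymm (by simpa using p.sInf_image_preimage_le (f := f) 0)
    (p.le_sInf_image_preimage hf fun x _ => apply_nonneg p x)

noncomputable def factor (hf : Function.Surjective f) : Seminorm ℝ F :=
  Seminorm.ofSMulLE (fun y => sInf (p '' (f ⁻¹' {y}))) (p.sInf_image_preimage_zero hf)
    (p.sInf_image_preimage_add_le hf) (p.sInf_image_preimage_smul_le hf)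

theorem factor_apply (hf : Function.Surjective f) (y : F) :
    p.factor hf y = sInf (p '' (f ⁻¹' {y})) :=
  rfl

theorem isGreatest_factor (hf : Function.Surjective f) (y : F) :
    IsGreatest ((fun g : Module.Dual ℝ F => g y) '' {g | ∀ x, g (f x) ≤ p x}) (p.factor hf y) := by
  refine ⟨?_, ?_⟩
  · obtain ⟨g, hgy, hg⟩ := (p.factor hf).exists_dual_eq_and_le y
    refine ⟨g, fun x => (hg (f x)).trans ?_, hgy⟩
    exact p.sInf_image_preimage_le x
  · rintro _ ⟨g, hg, rfl⟩
    exact p.le_sInf_image_preimage hf fun x hx => hx ▸ hg x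

end Factor

end Seminorm

theorem Matrix.mul_eq_one_of_mul_mul_eq_self {m k R : Type*} [Fintype m] [Fintype k]
    [DecidableEq m] [Semiring R] {A : Matrix m k R} {B : Matrix k m R}
    (hA : ∀ y, ∃ x, A *ᵥ x = y) (h : A * B * A = A) : A * B = 1 := by
  refine ext_iff_mulVec.mpr fun y => ?_
  obtain ⟨x, rfl⟩ := hA y
  rw [mulVec_mulVec, h, one_mulVec]

theorem stmt5_general {n n' : ℕ}
    (nrm : (Fin n → ℝ) → ℝ)
    (hh : ∀ (c : ℝ) x, nrm (c • x) = |c| * nrm x)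
    (htri : ∀ x y, nrm (x + y) ≤ nrm x + nrm y)
    (Bstar : Set (Fin n → ℝ))
    (hBstar : Bstar = {z | ∀ x, nrm x ≤ 1 → z ⬝ᵥ x ≤ 1})
    (A : Matrix (Fin n') (Fin n) ℝ)
    (hsurj : ∀ y : Fin n' → ℝ, ∃ x, A *ᵥ x = y)
    (Adag : Matrix (Fin n) (Fin n') ℝ)
    (hMP1 : A * Adag * A = A) :
    ∀ y : Fin n' → ℝ,
      sInf {r | ∃ x, A *ᵥ x = y ∧ r = nrm x} =
        sSup {r | ∃ z ∈ Bstar, (∃ u, Aᵀ *ᵥ u = z) ∧ r = (Adagᵀ *ᵥ z) ⬝ᵥ y} := by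
  intro y
  let p : Seminorm ℝ (Fin n → ℝ) := .of nrm htri fun c x => by rw [hh, Real.norm_eq_abs]
  have hf : Function.Surjective A.mulVecLin := hsurj
  have hpolar (z) : z ∈ Bstar ↔ ∀ x, z ⬝ᵥ x ≤ nrm x :=
    hBstar ▸ p.forall_le_one_imp_le_one_iff_le (dotProductEquiv ℝ _ z)
  have hval (u) : (Adagᵀ *ᵥ (Aᵀ *ᵥ u)) ⬝ᵥ y = u ⬝ᵥ y := by
    rw [mulVec_mulVec, ← transpose_mul, mul_eq_one_of_mul_mul_eq_self hsurj hMP1, transpose_one,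
      one_mulVec]
  have htr (u x) : (Aᵀ *ᵥ u) ⬝ᵥ x = u ⬝ᵥ (A *ᵥ x) := by
    rw [dotProduct_comm, dotProduct_transpose_mulVec]
  have hlhs : {r | ∃ x, A *ᵥ x = y ∧ r = nrm x} = p '' (A.mulVecLin ⁻¹' {y}) := by
    ext r
    exact exists_congr fun _ => and_congr Iff.rfl eq_comm
  have hrhs : {r | ∃ z ∈ Bstar, (∃ u, Aᵀ *ᵥ u = z) ∧ r = (Adagᵀ *ᵥ z) ⬝ᵥ y} =
      (fun g : Module.Dual ℝ _ => g y) '' {g | ∀ x, g (A.mulVecLin x) ≤ p x} := by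
    ext r
    constructor
    · rintro ⟨_, hz, ⟨u, rfl⟩, rfl⟩
      refine ⟨dotProductEquiv ℝ _ u, fun x => ?_, (hval u).symm⟩
      exact (htr u x).symm.trans_le ((hpolar _).mp hz x)
    · rintro ⟨g, hg, rfl⟩
      obtain ⟨u, rfl⟩ := (dotProductEquiv ℝ (Fin n')).surjective g
      exact ⟨Aᵀ *ᵥ u, (hpolar _).mpr fun x => (htr u x).trans_le (hg x), ⟨u, rfl⟩, (hval u).symm⟩
  rw [hlhs, hrhs, (p.isGreatest_factor hf y).csSup_eq, p.factor_apply]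

/-- For a norm `‖·‖` on `ℝⁿ` with polar `B*` of its unit ball and a surjective linear map
`A : ℝⁿ → ℝ^{n'}` with Moore–Penrose pseudoinverse `A†`, the factor-norm
`‖y‖' = min{‖x‖ : Ax = y}` satisfies `‖y‖' = max{((A†)ᵀ z)ᵀ y : z ∈ B* ∩ Im Aᵀ}`. -/
theorem stmt5 {n n' : ℕ}
    (nrm : (Fin n → ℝ) → ℝ)
    (h0 : ∀ x, 0 ≤ nrm x) (hdef : ∀ x, nrm x = 0 → x = 0)
    (hh : ∀ (c : ℝ) x, nrm (c • x) = |c| * nrm x)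
    (htri : ∀ x y, nrm (x + y) ≤ nrm x + nrm y)
    (Bstar : Set (Fin n → ℝ))
    (hBstar : Bstar = {z | ∀ x, nrm x ≤ 1 → z ⬝ᵥ x ≤ 1})
    (A : Matrix (Fin n') (Fin n) ℝ)
    (hsurj : ∀ y : Fin n' → ℝ, ∃ x, A *ᵥ x = y)
    (Adag : Matrix (Fin n) (Fin n') ℝ)
    (hMP1 : A * Adag * A = A) (hMP2 : Adag * A * Adag = Adag)
    (hMP3 : (A * Adag)ᵀ = A * Adag) (hMP4 : (Adag * A)ᵀ = Adag * A) :
    ∀ y : Fin n' → ℝ,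
      sInf {r | ∃ x, A *ᵥ x = y ∧ r = nrm x} =
        sSup {r | ∃ z ∈ Bstar, (∃ u, Aᵀ *ᵥ u = z) ∧ r = (Adagᵀ *ᵥ z) ⬝ᵥ y} :=
  stmt5_general nrm hh htri Bstar hBstar A hsurj Adag hMP1
end

section
/- Let ‖·‖_X be a norm on ℝⁿ with unit ball X = Conv(⋃_{i=1}^I P_i X_i) for compact, origin-symmetric convex sets X_i and linear maps P_i, and let ‖·‖_B be a norm on ℝᵐ whose unit ball B has polar B_* = Conv(⋃_{j=1}^J Q_j Z_j) for compact, origin-symmetric convex sets Z_j and linear maps Q_j. Then for every A ∈ ℝ^{m×n}, ‖A‖_{B,X} = max_{i,j} max{ z_jᵀ Q_jᵀ A P_i x_i : z_j ∈ Z_j, x_i ∈ X_i }. -/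
open Matrix Set

lemma myNorm_zero {k : ℕ} (f : (Fin k → ℝ) → ℝ)
    (hh : ∀ (c : ℝ) x, f (c • x) = |c| * f x) : f 0 = 0 := by
  have := hh 0 0; simpa using this

lemma pi_eq_sum_single {k : ℕ} (v : Fin k → ℝ) :
    v = ∑ i, (v i) • (Pi.single i (1:ℝ) : Fin k → ℝ) := by
  funext j
  simp [Finset.sum_apply, Pi.single_apply, Finset.sum_ite_eq', mul_comm]

lemma myNorm_sum_le {k : ℕ} (f : (Fin k → ℝ) → ℝ)
    (hh : ∀ (c : ℝ) x, f (c • x) = |c| * f x)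
    (htri : ∀ x y, f (x + y) ≤ f x + f y)
    {ι : Type*} (s : Finset ι) (g : ι → (Fin k → ℝ)) :
    f (∑ i ∈ s, g i) ≤ ∑ i ∈ s, f (g i) := by
  classical
  induction s using Finset.cons_induction with
  | empty => simp [myNorm_zero f hh]
  | cons a s ha ih =>
    rw [Finset.sum_cons, Finset.sum_cons]
    exact le_trans (htri _ _) (by linarith)

lemma myNorm_continuous {k : ℕ} (f : (Fin k → ℝ) → ℝ)
    (h0 : ∀ x, 0 ≤ f x)
    (hh : ∀ (c : ℝ) x, f (c • x) = |c| * f x)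
    (htri : ∀ x y, f (x + y) ≤ f x + f y) : Continuous f := by
  set C : ℝ := ∑ i, f (Pi.single i 1) with hC
  have hC0 : 0 ≤ C := Finset.sum_nonneg fun i _ => h0 _
  have hbound : ∀ x, f x ≤ C * ‖x‖ := by
    intro x
    calc f x = f (∑ i, (x i) • (Pi.single i (1:ℝ) : Fin k → ℝ)) := by
          rw [← pi_eq_sum_single]
      _ ≤ ∑ i, f ((x i) • (Pi.single i (1:ℝ) : Fin k → ℝ)) := myNorm_sum_le f hh htri _ _
      _ = ∑ i, |x i| * f (Pi.single i (1:ℝ)) := by simp [hh]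
      _ ≤ ∑ i, ‖x‖ * f (Pi.single i (1:ℝ)) := by
          refine Finset.sum_le_sum fun i _ => ?_
          exact mul_le_mul_of_nonneg_right (by simpa using norm_le_pi_norm x i) (h0 _)
      _ = C * ‖x‖ := by rw [← Finset.mul_sum, mul_comm]
  have hlip : LipschitzWith ⟨C, hC0⟩ f := by
    refine LipschitzWith.of_dist_le_mul fun x y => ?_
    have h1 : f x - f y ≤ f (x - y) := by
      have h := htri (x - y) y
      rw [sub_add_cancel] at h
      linarith
    have hneg : f (y - x) = f (x - y) := by
      rw [← neg_sub x y, ← neg_one_smul ℝ (x - y), hh]; simp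
    have h2 : f y - f x ≤ f (x - y) := by
      have h := htri (y - x) x
      rw [sub_add_cancel, hneg] at h
      linarith
    have habs : |f x - f y| ≤ f (x - y) := abs_sub_le_iff.mpr ⟨h1, h2⟩
    calc dist (f x) (f y) = |f x - f y| := Real.dist_eq _ _
      _ ≤ f (x - y) := habs
      _ ≤ C * ‖x - y‖ := hbound _
      _ = ↑(⟨C, hC0⟩ : NNReal) * dist x y := by rw [dist_eq_norm]
  exact hlip.continuous

lemma dot_matrix_assoc {a b m n : ℕ} (Q : Matrix (Fin m) (Fin a) ℝ) (P : Matrix (Fin n) (Fin b) ℝ)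
    (A : Matrix (Fin m) (Fin n) ℝ) (z : Fin a → ℝ) (v : Fin b → ℝ) :
    (Q *ᵥ z) ⬝ᵥ (A *ᵥ (P *ᵥ v)) = z ⬝ᵥ (Qᵀ * A * P) *ᵥ v := by
  rw [mulVec_mulVec, dotProduct_mulVec, ← vecMul_transpose Q z, vecMul_vecMul,
    dotProduct_mulVec, Matrix.mul_assoc]

/-- If the unit ball of `‖·‖_X` is `Conv(⋃ᵢ Pᵢ Xᵢ)` and the polar of the unit ball of
`‖·‖_B` is `Conv(⋃ⱼ Qⱼ Zⱼ)`, then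
`‖A‖_{B,X} = max_{i,j} max{zᵀ Qⱼᵀ A Pᵢ x : z ∈ Zⱼ, x ∈ Xᵢ}`. -/
theorem stmt7 {I J n m : ℕ} (ni : Fin I → ℕ) (mj : Fin J → ℕ)
    (Xi : ∀ i, Set (Fin (ni i) → ℝ)) (Zj : ∀ j, Set (Fin (mj j) → ℝ))
    (P : ∀ i, Matrix (Fin n) (Fin (ni i)) ℝ)
    (Q : ∀ j, Matrix (Fin m) (Fin (mj j)) ℝ)
    (hXicomp : ∀ i, IsCompact (Xi i)) (hXiconv : ∀ i, Convex ℝ (Xi i))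
    (hXisym : ∀ i, ∀ x ∈ Xi i, -x ∈ Xi i)
    (hZjcomp : ∀ j, IsCompact (Zj j)) (hZjconv : ∀ j, Convex ℝ (Zj j))
    (hZjsym : ∀ j, ∀ z ∈ Zj j, -z ∈ Zj j)
    (nX : (Fin n → ℝ) → ℝ) (nB : (Fin m → ℝ) → ℝ)
    (hX0 : ∀ x, 0 ≤ nX x) (hXdef : ∀ x, nX x = 0 → x = 0)
    (hXh : ∀ (c : ℝ) x, nX (c • x) = |c| * nX x)
    (hXtri : ∀ x y, nX (x + y) ≤ nX x + nX y)
    (hB0 : ∀ u, 0 ≤ nB u) (hBdef : ∀ u, nB u = 0 → u = 0)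
    (hBh : ∀ (c : ℝ) u, nB (c • u) = |c| * nB u)
    (hBtri : ∀ u v, nB (u + v) ≤ nB u + nB v)
    (X : Set (Fin n → ℝ)) (hXball : X = {x | nX x ≤ 1})
    (hX : X = convexHull ℝ (⋃ i, (fun v => (P i) *ᵥ v) '' Xi i))
    (B : Set (Fin m → ℝ)) (hBball : B = {u | nB u ≤ 1})
    (Bstar : Set (Fin m → ℝ)) (hBstar : Bstar = {y | ∀ v ∈ B, y ⬝ᵥ v ≤ 1})
    (hBs : Bstar = convexHull ℝ (⋃ j, (fun z => (Q j) *ᵥ z) '' Zj j))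
    (A : Matrix (Fin m) (Fin n) ℝ) :
    sSup ((fun x => nB (A *ᵥ x)) '' X) =
      sSup {r | ∃ i j, ∃ z ∈ Zj j, ∃ x ∈ Xi i, r = z ⬝ᵥ ((Q j)ᵀ * A * P i) *ᵥ x} := by
  classical
  have hnBcont : Continuous nB := myNorm_continuous nB hB0 hBh hBtri
  have hnB0 : nB 0 = 0 := myNorm_zero nB hBh
  have hnX0 : nX 0 = 0 := myNorm_zero nX hXh
  have h0X : (0 : Fin n → ℝ) ∈ X := by rw [hXball]; simp [hnX0]
  have h0B : (0 : Fin m → ℝ) ∈ B := by rw [hBball]; simp [hnB0]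
  have h0Bs : (0 : Fin m → ℝ) ∈ Bstar := by
    rw [hBstar]; intro v hv; simp
  -- elements of the polar bound the norm from below
  have hdual_le : ∀ y ∈ Bstar, ∀ u, y ⬝ᵥ u ≤ nB u := by
    intro y hy u
    rcases eq_or_lt_of_le (hB0 u) with h | h
    · have hu : u = 0 := hBdef u h.symm
      simp [hu, hnB0]
    · have hmem : (nB u)⁻¹ • u ∈ B := by
        rw [hBball]
        simp only [mem_setOf_eq, hBh]
        rw [abs_of_pos (inv_pos.mpr h), inv_mul_cancel₀ (ne_of_gt h)]
      rw [hBstar] at hy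
      have hle := hy _ hmem
      rw [dotProduct_smul, smul_eq_mul] at hle
      have h2 := mul_le_mul_of_nonneg_left hle (le_of_lt h)
      rwa [← mul_assoc, mul_inv_cancel₀ (ne_of_gt h), one_mul, mul_one] at h2
  -- separation: the polar recovers the norm
  have hBconv : Convex ℝ B := by
    rw [hBball]
    intro x hx y hy a b ha hb hab
    simp only [mem_setOf_eq] at hx hy ⊢
    calc nB (a • x + b • y) ≤ nB (a • x) + nB (b • y) := hBtri _ _
      _ = |a| * nB x + |b| * nB y := by rw [hBh, hBh]
      _ ≤ a * 1 + b * 1 := by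
          rw [abs_of_nonneg ha, abs_of_nonneg hb]
          gcongr
      _ = 1 := by linarith
  have hBclosed : IsClosed B := by
    rw [hBball]
    have : {u | nB u ≤ 1} = nB ⁻¹' Set.Iic 1 := rfl
    rw [this]
    exact isClosed_Iic.preimage hnBcont
  have hdual_ge : ∀ (u : Fin m → ℝ) (t : ℝ), t < nB u → ∃ y ∈ Bstar, t < y ⬝ᵥ u := by
    intro u t ht
    rcases lt_or_ge t 0 with h | h
    · exact ⟨0, h0Bs, by simpa using h⟩
    · set s : ℝ := (t + nB u) / 2 with hs
      have hs0 : 0 < s := by simp only [hs]; linarith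
      have hslt : s < nB u := by simp only [hs]; linarith
      have hsnot : s⁻¹ • u ∉ B := by
        rw [hBball]
        simp only [mem_setOf_eq, hBh, not_le, abs_of_pos (inv_pos.mpr hs0)]
        calc (1:ℝ) = s⁻¹ * s := by field_simp
          _ < s⁻¹ * nB u := by
              exact mul_lt_mul_of_pos_left hslt (inv_pos.mpr hs0)
      obtain ⟨g, c, hg1, hg2⟩ := geometric_hahn_banach_closed_point hBconv hBclosed hsnot
      have hc0 : 0 < c := by have := hg1 0 h0B; simpa using this
      set y : Fin m → ℝ := fun i => c⁻¹ * g (Pi.single i 1) with hy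
      have hgv : ∀ v, y ⬝ᵥ v = c⁻¹ * g v := by
        intro v
        have hgsum : g v = ∑ i, v i * g (Pi.single i 1) := by
          conv_lhs => rw [pi_eq_sum_single v]
          rw [map_sum]
          refine Finset.sum_congr rfl fun i _ => ?_
          rw [_root_.map_smul, smul_eq_mul]
        rw [hgsum, Finset.mul_sum, dotProduct]
        refine Finset.sum_congr rfl fun i _ => ?_
        simp only [hy]; ring
      have hyBs : y ∈ Bstar := by
        rw [hBstar]
        intro v hv
        rw [hgv]
        have hgvc := hg1 v hv
        calc c⁻¹ * g v ≤ c⁻¹ * c := by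
              exact mul_le_mul_of_nonneg_left (le_of_lt hgvc) (le_of_lt (inv_pos.mpr hc0))
          _ = 1 := by field_simp
      refine ⟨y, hyBs, ?_⟩
      have hgu : g (s⁻¹ • u) = s⁻¹ * g u := by rw [_root_.map_smul, smul_eq_mul]
      have h2 : c < s⁻¹ * g u := by rw [← hgu]; exact hg2
      have h3 : s * c < g u := by
        have := mul_lt_mul_of_pos_left h2 hs0
        rw [← mul_assoc, mul_inv_cancel₀ (ne_of_gt hs0), one_mul] at this
        exact this
      rw [hgv]
      have h4 : s < c⁻¹ * g u := by
        have := mul_lt_mul_of_pos_left h3 (inv_pos.mpr hc0)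
        calc s = c⁻¹ * (s * c) := by
              rw [mul_comm s c, ← mul_assoc, inv_mul_cancel₀ (ne_of_gt hc0), one_mul]
          _ < c⁻¹ * g u := this
      linarith
  -- continuity / compactness infrastructure
  have hmvc : ∀ {a b : ℕ} (M : Matrix (Fin a) (Fin b) ℝ),
      Continuous (fun v : Fin b → ℝ => M *ᵥ v) := by
    intro a b M
    exact (Matrix.mulVecLin M).continuous_of_finiteDimensional
  have hconvB : ConvexOn ℝ (convexHull ℝ (⋃ i, (fun v => (P i) *ᵥ v) '' Xi i))
      (fun x => nB (A *ᵥ x)) := by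
    refine ⟨convex_convexHull ℝ _, fun p _ q _ a b ha hb hab => ?_⟩
    have heq : A *ᵥ (a • p + b • q) = a • (A *ᵥ p) + b • (A *ᵥ q) := by
      rw [mulVec_add, mulVec_smul, mulVec_smul]
    simp only [heq, smul_eq_mul]
    calc nB (a • (A *ᵥ p) + b • (A *ᵥ q))
        ≤ nB (a • (A *ᵥ p)) + nB (b • (A *ᵥ q)) := hBtri _ _
      _ = |a| * nB (A *ᵥ p) + |b| * nB (A *ᵥ q) := by rw [hBh, hBh]
      _ = a * nB (A *ᵥ p) + b * nB (A *ᵥ q) := by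
          rw [abs_of_nonneg ha, abs_of_nonneg hb]
  have hred : ∀ x ∈ X, ∃ i, ∃ v ∈ Xi i, nB (A *ᵥ x) ≤ nB (A *ᵥ ((P i) *ᵥ v)) := by
    intro x hxX
    have hx2 : x ∈ convexHull ℝ (⋃ i, (fun v => (P i) *ᵥ v) '' Xi i) := by
      rw [← hX]; exact hxX
    obtain ⟨x', hx', hle⟩ :=
      hconvB.exists_ge_of_mem_convexHull (subset_convexHull ℝ _) hx2
    simp only [mem_iUnion, mem_image] at hx'
    obtain ⟨i, v, hv, rfl⟩ := hx'
    exact ⟨i, v, hv, hle⟩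
  set S1 := (fun x => nB (A *ᵥ x)) '' X with hS1
  set S2 := {r | ∃ i j, ∃ z ∈ Zj j, ∃ x ∈ Xi i, r = z ⬝ᵥ ((Q j)ᵀ * A * P i) *ᵥ x} with hS2
  have hS1ne : S1.Nonempty := ⟨_, ⟨0, h0X, rfl⟩⟩
  have hKcomp : IsCompact (⋃ i, (fun v => (P i) *ᵥ v) '' Xi i) :=
    isCompact_iUnion fun i => (hXicomp i).image (hmvc _)
  have hTbdd : BddAbove ((fun x => nB (A *ᵥ x)) '' (⋃ i, (fun v => (P i) *ᵥ v) '' Xi i)) :=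
    (hKcomp.image (hnBcont.comp (hmvc A))).bddAbove
  obtain ⟨M, hM⟩ := hTbdd
  have hS1bdd : BddAbove S1 := by
    refine ⟨M, ?_⟩
    rintro r ⟨x, hxX, rfl⟩
    obtain ⟨i, v, hv, hle⟩ := hred x hxX
    exact hle.trans (hM ⟨(P i) *ᵥ v, mem_iUnion.mpr ⟨i, mem_image_of_mem _ hv⟩, rfl⟩)
  have hXine : ∃ i, (Xi i).Nonempty := by
    have hne : (⋃ i, (fun v => (P i) *ᵥ v) '' Xi i).Nonempty :=
      convexHull_nonempty_iff.mp ⟨0, hX ▸ h0X⟩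
    obtain ⟨x, hx⟩ := hne
    simp only [mem_iUnion, mem_image] at hx
    obtain ⟨i, v, hv, _⟩ := hx
    exact ⟨i, v, hv⟩
  have hZjne : ∃ j, (Zj j).Nonempty := by
    have hne : (⋃ j, (fun z => (Q j) *ᵥ z) '' Zj j).Nonempty :=
      convexHull_nonempty_iff.mp ⟨0, hBs ▸ h0Bs⟩
    obtain ⟨z, hz⟩ := hne
    simp only [mem_iUnion, mem_image] at hz
    obtain ⟨j, w, hw, _⟩ := hz
    exact ⟨j, w, hw⟩
  obtain ⟨i0, x0, hx0⟩ := hXine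
  obtain ⟨j0, z0, hz0⟩ := hZjne
  have hS2ne : S2.Nonempty := ⟨_, i0, j0, z0, hz0, x0, hx0, rfl⟩
  have hPX : ∀ i, ∀ v ∈ Xi i, (P i) *ᵥ v ∈ X := by
    intro i v hv
    rw [hX]
    exact subset_convexHull ℝ _ (mem_iUnion.mpr ⟨i, mem_image_of_mem _ hv⟩)
  have hQBs : ∀ j, ∀ z ∈ Zj j, (Q j) *ᵥ z ∈ Bstar := by
    intro j z hz
    rw [hBs]
    exact subset_convexHull ℝ _ (mem_iUnion.mpr ⟨j, mem_image_of_mem _ hz⟩)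
  have hS2le : ∀ r ∈ S2, ∃ s ∈ S1, r ≤ s := by
    rintro r ⟨i, j, z, hz, x, hx, rfl⟩
    refine ⟨nB (A *ᵥ ((P i) *ᵥ x)), ⟨_, hPX i x hx, rfl⟩, ?_⟩
    have := hdual_le _ (hQBs j z hz) (A *ᵥ ((P i) *ᵥ x))
    rwa [dot_matrix_assoc] at this
  have hS2bdd : BddAbove S2 := by
    refine ⟨sSup S1, fun r hr => ?_⟩
    obtain ⟨s, hs, hrs⟩ := hS2le r hr
    exact hrs.trans (le_csSup hS1bdd hs)
  apply le_antisymm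
  · apply csSup_le hS1ne
    rintro r ⟨x, hxX, rfl⟩
    obtain ⟨i, v, hv, hle⟩ := hred x hxX
    refine hle.trans ?_
    refine le_of_forall_lt fun t ht => ?_
    obtain ⟨y, hyBs, hty⟩ := hdual_ge _ t ht
    have hyconv : y ∈ convexHull ℝ (⋃ j, (fun z => (Q j) *ᵥ z) '' Zj j) := by
      rw [← hBs]; exact hyBs
    have hlin : ConvexOn ℝ (convexHull ℝ (⋃ j, (fun z => (Q j) *ᵥ z) '' Zj j))
        (fun y => y ⬝ᵥ (A *ᵥ ((P i) *ᵥ v))) := by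
      refine ⟨convex_convexHull ℝ _, fun p _ q _ a b ha hb hab => ?_⟩
      simp only [add_dotProduct, smul_dotProduct, smul_eq_mul]
      exact le_of_eq rfl
    obtain ⟨y', hy', hle2⟩ := hlin.exists_ge_of_mem_convexHull (subset_convexHull ℝ _) hyconv
    simp only [mem_iUnion, mem_image] at hy'
    obtain ⟨j, z, hz, rfl⟩ := hy'
    have hmem : (Q j *ᵥ z) ⬝ᵥ (A *ᵥ ((P i) *ᵥ v)) ∈ S2 := by
      rw [dot_matrix_assoc]
      exact ⟨i, j, z, hz, v, hv, rfl⟩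
    calc t < y ⬝ᵥ (A *ᵥ ((P i) *ᵥ v)) := hty
      _ ≤ (Q j *ᵥ z) ⬝ᵥ (A *ᵥ ((P i) *ᵥ v)) := hle2
      _ ≤ sSup S2 := le_csSup hS2bdd hmem
  · apply csSup_le hS2ne
    intro r hr
    obtain ⟨s, hs, hrs⟩ := hS2le r hr
    exact hrs.trans (le_csSup hS1bdd hs)
end

section
/- Let X = {x ∈ ℝᵖ : ∃ t ∈ T, xᵀ T_k x ≤ t_k, k ≤ K} be a basic ellitope and let a ∈ ℝᵖ be a row vector. Then max_{x ∈ X} aᵀx equals the value of the convex program min over λ ≥ 0 and υ ∈ ℝ of φ_T(λ) + υ subject to the 2×2-block matrix [[υ, aᵀ/2],[a/2, ∑_k λ_k T_k]] being positive semidefinite. -/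
/-!
Weak duality: if the block matrix is positive semidefinite, its quadratic form at `(1, -x)` gives
`aᵀx ≤ υ + ∑ λₖ xᵀTₖx ≤ υ + φ_T(λ)` for `x ∈ X`.

Conversely, `max {aᵀx : xᵀTₖx ≤ tₖ, t ∈ T}` is a convex program (linear objective, convex
constraints, convex `T`) satisfying Slater's condition at `x = 0`, `t ∈ int T` (interior points
of `T ⊆ ℝᴷ₊` are positive). Separating `(M, 0)`, with `M` the optimal value, from the open convex
set of pairs (value, slacks) that are strictly attained yields Lagrange multipliers `λ ≥ 0` with
`aᵀx + ∑ λₖ (tₖ - xᵀTₖx) ≤ M` for all `x` and `t ∈ T`; Slater's condition makes the multiplier of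
the objective positive. With `υ = M - φ_T(λ)` this says `υ + aᵀx + xᵀ(∑ λₖTₖ)x ≥ 0` for all `x`,
i.e. that the block matrix, the homogenization of this quadratic function, is positive
semidefinite. Positive definiteness of `∑ Tₖ` and compactness of `T` keep every supremum finite.
-/

open Matrix Set Filter Topology

namespace Matrix

variable {n : Type*} [Fintype n]

lemma PosSemidef.convexOn_dotProduct_mulVec {A : Matrix n n ℝ} (hA : A.PosSemidef) :
    ConvexOn ℝ univ fun x => x ⬝ᵥ A *ᵥ x := by
  refine ⟨convex_univ, fun x _ y _ α β hα hβ hαβ => ?_⟩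
  have hsymm : y ⬝ᵥ A *ᵥ x = x ⬝ᵥ A *ᵥ y := by
    rw [dotProduct_mulVec, ← mulVec_transpose, (isHermitian_iff_isSymm.mp hA.isHermitian).eq,
      dotProduct_comm]
  have hxy := hA.dotProduct_mulVec_nonneg (x - y)
  simp only [star_trivial, mulVec_add, mulVec_sub, mulVec_smul, dotProduct_add, dotProduct_sub,
    add_dotProduct, sub_dotProduct, dotProduct_smul, smul_dotProduct, smul_eq_mul, hsymm] at hxy ⊢
  obtain rfl : β = 1 - α := by linarith
  nlinarith [mul_nonneg (mul_nonneg hα hβ) hxy]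

lemma PosDef.exists_pos_mul_sq_norm_le {A : Matrix n n ℝ} (hA : A.PosDef) :
    ∃ m > 0, ∀ x : n → ℝ, m * ‖x‖ ^ 2 ≤ x ⬝ᵥ A *ᵥ x := by
  have hcont : Continuous fun x : n → ℝ => x ⬝ᵥ A *ᵥ x := by fun_prop
  obtain ⟨m, hm, hmin⟩ := (isCompact_sphere (0 : n → ℝ) 1).exists_forall_le' hcont.continuousOn
    fun x hx => by simpa using hA.dotProduct_mulVec_pos (ne_zero_of_mem_unit_sphere ⟨x, hx⟩)
  refine ⟨m, hm, fun x => ?_⟩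
  rcases eq_or_ne x 0 with rfl | hx
  · simp
  have hnorm : 0 < ‖x‖ := norm_pos_iff.2 hx
  have h := hmin (‖x‖⁻¹ • x) (by simp [norm_smul, hnorm.ne'])
  simp only [mulVec_smul, dotProduct_smul, smul_dotProduct, smul_eq_mul] at h
  have := mul_le_mul_of_nonneg_left h (sq_nonneg ‖x‖)
  field_simp at this
  linarith

lemma PosDef.isCompact_setOf_dotProduct_mulVec_le {A : Matrix n n ℝ} (hA : A.PosDef) (C : ℝ) :
    IsCompact {x : n → ℝ | x ⬝ᵥ A *ᵥ x ≤ C} := by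
  obtain ⟨m, hm, hmA⟩ := hA.exists_pos_mul_sq_norm_le
  refine Metric.isCompact_of_isClosed_isBounded (isClosed_le (by fun_prop) continuous_const) ?_
  refine isBounded_iff_forall_norm_le.2 ⟨1 + C / m, fun x hx => ?_⟩
  have : ‖x‖ ^ 2 ≤ C / m := by rw [le_div_iff₀ hm]; linarith [hmA x, hx.out]
  nlinarith [sq_nonneg (‖x‖ - 1)]

noncomputable def homogenization (υ : ℝ) (a : n → ℝ) (D : Matrix n n ℝ) :
    Matrix (Fin 1 ⊕ n) (Fin 1 ⊕ n) ℝ :=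
  fromBlocks (of fun _ _ => υ) (of fun _ j => a j / 2) (of fun i _ => a i / 2) D

lemma dotProduct_mulVec_homogenization (υ : ℝ) (a : n → ℝ) (D : Matrix n n ℝ)
    (s : ℝ) (x : n → ℝ) :
    Sum.elim (fun _ => s) x ⬝ᵥ homogenization υ a D *ᵥ Sum.elim (fun _ => s) x
      = υ * s ^ 2 + s * (a ⬝ᵥ x) + x ⬝ᵥ D *ᵥ x := by
  rw [homogenization, fromBlocks_mulVec, sumElim_dotProduct_sumElim]
  simp only [Sum.elim_comp_inl, Sum.elim_comp_inr]
  have hcross : ∑ i, s * (a i / 2 * x i) + ∑ i, x i * (a i / 2 * s) = s * (a ⬝ᵥ x) := by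
    rw [← Finset.sum_add_distrib, dotProduct, Finset.mul_sum]
    exact Finset.sum_congr rfl fun i _ => by ring
  simp only [dotProduct, mulVec, of_apply, Pi.add_apply, Finset.univ_unique, Finset.sum_singleton,
    mul_add, Finset.sum_add_distrib, Finset.mul_sum] at hcross ⊢
  linear_combination hcross

lemma posSemidef_homogenization {υ : ℝ} {a : n → ℝ} {D : Matrix n n ℝ} (hD : D.PosSemidef)
    (h : ∀ x, 0 ≤ υ + a ⬝ᵥ x + x ⬝ᵥ D *ᵥ x) : (homogenization υ a D).PosSemidef := by
  refine .of_dotProduct_mulVec_nonneg ?_ fun y => ?_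
  · refine IsHermitian.fromBlocks ?_ ?_ hD.isHermitian
    · ext; simp
    · ext; simp
  · rw [star_trivial, ← Sum.elim_comp_inl_inr y, show y ∘ Sum.inl = fun _ => y (.inl 0) from
      funext fun i => by rw [Subsingleton.elim i 0]; rfl, dotProduct_mulVec_homogenization]
    set s := y (.inl 0)
    set x := y ∘ Sum.inr
    rcases eq_or_ne s 0 with hs | hs
    · simpa [hs] using hD.dotProduct_mulVec_nonneg x
    · have hx := mul_nonneg (sq_nonneg s) (h (s⁻¹ • x))
      simp only [dotProduct_smul, mulVec_smul, smul_dotProduct, smul_eq_mul] at hx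
      convert hx using 1
      field_simp

lemma nonneg_of_posSemidef_homogenization {υ : ℝ} {a : n → ℝ} {D : Matrix n n ℝ}
    (h : (homogenization υ a D).PosSemidef) (x : n → ℝ) : 0 ≤ υ + a ⬝ᵥ x + x ⬝ᵥ D *ᵥ x := by
  simpa [dotProduct_mulVec_homogenization] using
    h.dotProduct_mulVec_nonneg (Sum.elim (fun _ => 1) x)

end Matrix

lemma nonneg_of_forall_sub_nat_mul_lt {a b c : ℝ} (h : ∀ n : ℕ, a - n * b < c) : 0 ≤ b := by
  by_contra! hb
  obtain ⟨n, hn⟩ := exists_nat_gt ((c - a) / -b)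
  have := h n
  rw [div_lt_iff₀ (neg_pos.2 hb)] at hn
  linarith

lemma ContinuousLinearMap.apply_prod_pi {ι : Type*} [Fintype ι] [DecidableEq ι]
    (ℓ : StrongDual ℝ (ℝ × (ι → ℝ))) (r : ℝ) (u : ι → ℝ) :
    ℓ (r, u) = r * ℓ (1, 0) + ∑ k, u k * ℓ (0, Pi.single k 1) := by
  have hu := LinearMap.pi_apply_eq_sum_univ ((ℓ : ℝ × (ι → ℝ) →ₗ[ℝ] ℝ) ∘ₗ LinearMap.inr ℝ ℝ _) u
  simp only [LinearMap.coe_comp, Function.comp_apply, LinearMap.inr_apply,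
    ContinuousLinearMap.coe_coe] at hu
  have hr : ℓ (r, 0) = r * ℓ (1, 0) := by
    rw [← smul_eq_mul, ← map_smul, Prod.smul_mk, smul_zero, smul_eq_mul, mul_one]
  rw [← add_zero r, ← zero_add u, ← Prod.mk_add_mk, map_add, hu, hr]
  have hsingle (i : ι) : (fun j => if i = j then (1 : ℝ) else 0) = Pi.single i 1 :=
    funext fun j => by simp [Pi.single_apply, eq_comm]
  simp only [zero_add, add_zero, smul_eq_mul, hsingle]

section Lagrange

variable {E ι : Type*}

def slackRegion (f : E → ℝ) (g : ι → E → ℝ) (T : Set (ι → ℝ)) : Set (ℝ × (ι → ℝ)) :=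
  {z | ∃ x, ∃ t ∈ T, z.1 < f x ∧ ∀ k, z.2 k < t k - g k x}

variable {f : E → ℝ} {g : ι → E → ℝ} {T : Set (ι → ℝ)}

lemma isOpen_slackRegion [Finite ι] : IsOpen (slackRegion f g T) := by
  have : slackRegion f g T = ⋃ x, ⋃ t ∈ T,
      {z : ℝ × (ι → ℝ) | z.1 < f x} ∩ ⋂ k, {z | z.2 k < t k - g k x} := by
    ext; simp only [slackRegion, mem_ofPred_eq, mem_iUnion, mem_inter_iff, mem_iInter, exists_prop]
  rw [this]
  exact isOpen_iUnion fun x => isOpen_biUnion fun t _ =>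
    (isOpen_lt continuous_fst continuous_const).inter <| isOpen_iInter_of_finite fun k =>
      isOpen_lt (by fun_prop) continuous_const

lemma convex_slackRegion [AddCommGroup E] [Module ℝ E] (hf : ConcaveOn ℝ univ f)
    (hg : ∀ k, ConvexOn ℝ univ (g k)) (hT : Convex ℝ T) : Convex ℝ (slackRegion f g T) := by
  rw [convex_iff_forall_pos]
  rintro z ⟨x, t, ht, hzx, hzt⟩ z' ⟨x', t', ht', hzx', hzt'⟩ α β hα hβ hαβ
  refine ⟨α • x + β • x', α • t + β • t', hT ht ht' hα.le hβ.le hαβ, ?_, fun k => ?_⟩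
  · calc (α • z + β • z').1 = α * z.1 + β * z'.1 := rfl
      _ < α * f x + β * f x' := by gcongr
      _ ≤ f (α • x + β • x') := hf.2 (mem_univ _) (mem_univ _) hα.le hβ.le hαβ
  · have hgk := (hg k).2 (mem_univ x) (mem_univ x') hα.le hβ.le hαβ
    calc (α • z + β • z').2 k = α * z.2 k + β * z'.2 k := rfl
      _ < α * (t k - g k x) + β * (t' k - g k x') := by gcongr <;> simp_all
      _ ≤ (α • t + β • t') k - g k (α • x + β • x') := by
        simp only [smul_eq_mul] at hgk
        simp only [Pi.add_apply, Pi.smul_apply, smul_eq_mul]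
        linarith

lemma sub_mem_slackRegion {z w : ℝ × (ι → ℝ)} (hz : z ∈ slackRegion f g T) (hw : 0 ≤ w) :
    z - w ∈ slackRegion f g T := by
  obtain ⟨x, t, ht, hzx, hzt⟩ := hz
  have hw₁ : 0 ≤ w.1 := hw.1
  have hw₂ : ∀ k, 0 ≤ w.2 k := hw.2
  exact ⟨x, t, ht, by rw [Prod.fst_sub]; linarith,
    fun k => by rw [Prod.snd_sub, Pi.sub_apply]; linarith [hzt k, hw₂ k]⟩

lemma mem_closure_slackRegion (x : E) {t : ι → ℝ} (ht : t ∈ T) :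
    (f x, fun k => t k - g k x) ∈ closure (slackRegion f g T) := by
  refine mem_closure_of_tendsto (f := fun ε : ℝ => (f x, fun k => t k - g k x) - ε • 1)
    (b := 𝓝[>] 0) ?_ ?_
  · exact (Continuous.tendsto' (by fun_prop) 0 _ (by simp)).mono_left nhdsWithin_le_nhds
  · filter_upwards [self_mem_nhdsWithin] with ε (hε : 0 < ε)
    exact ⟨x, t, ht, by simpa, fun k => by simpa⟩

theorem exists_lagrange_multipliers [AddCommGroup E] [Module ℝ E] [Fintype ι]
    (hf : ConcaveOn ℝ univ f) (hg : ∀ k, ConvexOn ℝ univ (g k))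
    (hT : Convex ℝ T) {x₀ : E} {t₀ : ι → ℝ} (ht₀ : t₀ ∈ T) (hslater : ∀ k, g k x₀ < t₀ k)
    {M : ℝ} (hM : ∀ x, ∀ t ∈ T, (∀ k, g k x ≤ t k) → f x ≤ M) :
    ∃ lam : ι → ℝ, (∀ k, 0 ≤ lam k) ∧ ∀ x, ∀ t ∈ T, f x + ∑ k, lam k * (t k - g k x) ≤ M := by
  classical
  have hM_notMem : (M, 0) ∉ slackRegion f g T := by
    rintro ⟨x, t, ht, hMx, hxt⟩
    exact (hM x t ht fun k => (sub_pos.mp (hxt k)).le).not_gt hMx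
  obtain ⟨ℓ, hℓ⟩ := geometric_hahn_banach_open_point (convex_slackRegion hf hg hT)
    isOpen_slackRegion hM_notMem
  have hz₀ : (f x₀ - 1, 0) ∈ slackRegion f g T :=
    ⟨x₀, t₀, ht₀, by linarith, fun k => sub_pos.mpr (hslater k)⟩
  have hmono : ∀ w, 0 ≤ w → 0 ≤ ℓ w := fun w hw =>
    nonneg_of_forall_sub_nat_mul_lt fun n => by
      simpa using hℓ _ (sub_mem_slackRegion hz₀ (smul_nonneg (Nat.cast_nonneg (α := ℝ) n) hw))
  set α := ℓ (1, 0)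
  have hα : 0 < α := by
    refine (hmono (1, 0) ⟨zero_le_one, le_rfl⟩).lt_of_ne fun h => ?_
    have := hℓ _ hz₀
    rw [ℓ.apply_prod_pi (f x₀ - 1), ℓ.apply_prod_pi M, ← h] at this
    simp at this
  refine ⟨fun k => ℓ (0, Pi.single k 1) / α,
    fun k => div_nonneg (hmono (0, _) ⟨le_rfl, Pi.single_nonneg.2 zero_le_one⟩) hα.le,
    fun x t ht => ?_⟩
  have hle : ℓ (f x, fun k => t k - g k x) ≤ ℓ (M, 0) :=
    closure_minimal (fun z hz => (hℓ z hz).le) (isClosed_le ℓ.continuous continuous_const)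
      (mem_closure_slackRegion x ht)
  rw [ℓ.apply_prod_pi (f x), ℓ.apply_prod_pi M] at hle
  refine le_of_mul_le_mul_right ?_ hα
  calc (f x + ∑ k, ℓ (0, Pi.single k 1) / α * (t k - g k x)) * α
      = f x * α + ∑ k, (t k - g k x) * ℓ (0, Pi.single k 1) := by
        rw [add_mul, Finset.sum_mul]
        exact congrArg _ (Finset.sum_congr rfl fun k _ => by field_simp)
    _ ≤ M * α := by simpa using hle

end Lagrange

lemma pos_of_mem_interior_of_forall_nonneg {ι : Type*} [Finite ι] {T : Set (ι → ℝ)}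
    (hT : ∀ t ∈ T, ∀ k, 0 ≤ t k) {t : ι → ℝ} (ht : t ∈ interior T) (k : ι) : 0 < t k := by
  have hsub : interior T ⊆ interior (univ.pi fun _ => Ici 0) :=
    interior_mono fun t ht => mem_univ_pi.2 (hT t ht)
  rw [interior_pi_set finite_univ] at hsub
  simpa using hsub ht k (mem_univ k)

lemma Set.setOf_exists_eq_eq_image {α β : Type*} (f : α → β) (s : Set α) :
    {b | ∃ a ∈ s, b = f a} = f '' s := by
  simp only [image, eq_comm]

section Ellitope

variable {n ι : Type*} [Fintype n] [Fintype ι]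

def ellitope (Tm : ι → Matrix n n ℝ) (T : Set (ι → ℝ)) : Set (n → ℝ) :=
  {x | ∃ t ∈ T, ∀ k, x ⬝ᵥ Tm k *ᵥ x ≤ t k}

noncomputable def supportFunction (T : Set (ι → ℝ)) (lam : ι → ℝ) : ℝ :=
  sSup {s | ∃ t ∈ T, s = ∑ k, lam k * t k}

variable {Tm : ι → Matrix n n ℝ} {T : Set (ι → ℝ)}

lemma le_supportFunction (hT : IsCompact T) (lam : ι → ℝ) {t : ι → ℝ} (ht : t ∈ T) :
    ∑ k, lam k * t k ≤ supportFunction T lam := by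
  rw [supportFunction, Set.setOf_exists_eq_eq_image]
  exact le_csSup (hT.image (by fun_prop)).bddAbove (mem_image_of_mem _ ht)

lemma supportFunction_le (hT : T.Nonempty) {lam : ι → ℝ} {c : ℝ}
    (h : ∀ t ∈ T, ∑ k, lam k * t k ≤ c) : supportFunction T lam ≤ c := by
  rw [supportFunction, Set.setOf_exists_eq_eq_image]
  exact csSup_le (hT.image _) (forall_mem_image.2 h)

lemma dotProduct_sum_smul_mulVec (lam : ι → ℝ) (x : n → ℝ) :
    x ⬝ᵥ (∑ k, lam k • Tm k) *ᵥ x = ∑ k, lam k * (x ⬝ᵥ Tm k *ᵥ x) := by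
  simp [sum_mulVec, dotProduct_sum, smul_mulVec, dotProduct_smul]

lemma isBounded_ellitope (hTsum : (∑ k, Tm k).PosDef) (hT : IsCompact T) :
    Bornology.IsBounded (ellitope Tm T) := by
  obtain ⟨C, hC⟩ := (hT.image (by fun_prop : Continuous fun t : ι → ℝ => ∑ k, t k)).bddAbove
  refine (hTsum.isCompact_setOf_dotProduct_mulVec_le C).isBounded.subset fun x ⟨t, ht, hxt⟩ => ?_
  calc x ⬝ᵥ (∑ k, Tm k) *ᵥ x = ∑ k, x ⬝ᵥ Tm k *ᵥ x := by simp [sum_mulVec, dotProduct_sum]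
    _ ≤ ∑ k, t k := Finset.sum_le_sum fun k _ => hxt k
    _ ≤ C := hC (mem_image_of_mem _ ht)

lemma dotProduct_le_of_posSemidef_homogenization (hT : IsCompact T) {a : n → ℝ} {lam : ι → ℝ}
    {υ : ℝ} (hlam : ∀ k, 0 ≤ lam k)
    (hpsd : (homogenization υ a (∑ k, lam k • Tm k)).PosSemidef) {x : n → ℝ}
    (hx : x ∈ ellitope Tm T) : a ⬝ᵥ x ≤ supportFunction T lam + υ := by
  obtain ⟨t, ht, hxt⟩ := hx
  have hquad := nonneg_of_posSemidef_homogenization hpsd (-x)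
  rw [dotProduct_neg, neg_dotProduct, mulVec_neg, dotProduct_neg, neg_neg,
    dotProduct_sum_smul_mulVec] at hquad
  have hlt : ∑ k, lam k * (x ⬝ᵥ Tm k *ᵥ x) ≤ ∑ k, lam k * t k :=
    Finset.sum_le_sum fun k _ => mul_le_mul_of_nonneg_left (hxt k) (hlam k)
  linarith [le_supportFunction hT lam ht]

lemma posSemidef_homogenization_of_lagrangian_le (hTsd : ∀ k, (Tm k).PosSemidef)
    (hT : T.Nonempty) {a : n → ℝ} {lam : ι → ℝ} (hlam : ∀ k, 0 ≤ lam k) {M : ℝ}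
    (hL : ∀ x, ∀ t ∈ T, a ⬝ᵥ x + ∑ k, lam k * (t k - x ⬝ᵥ Tm k *ᵥ x) ≤ M) :
    (homogenization (M - supportFunction T lam) a (∑ k, lam k • Tm k)).PosSemidef := by
  refine posSemidef_homogenization
    (posSemidef_sum _ fun k _ => (hTsd k).smul (hlam k)) fun x => ?_
  have hφ : supportFunction T lam ≤ M + a ⬝ᵥ x + ∑ k, lam k * (x ⬝ᵥ Tm k *ᵥ x) :=
    supportFunction_le hT fun t ht => by
      have := hL (-x) t ht
      simp only [dotProduct_neg, neg_dotProduct, mulVec_neg, neg_neg, mul_sub,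
        Finset.sum_sub_distrib] at this
      linarith
  rw [dotProduct_sum_smul_mulVec]
  linarith

end Ellitope

theorem stmt8_general {p K : ℕ}
    (Tm : Fin K → Matrix (Fin p) (Fin p) ℝ)
    (T : Set (Fin K → ℝ))
    (hTsd : ∀ k, (Tm k).PosSemidef)
    (hTsum : (∑ k, Tm k).PosDef)
    (hTconv : Convex ℝ T) (hTcomp : IsCompact T)
    (hTnonneg : ∀ t ∈ T, ∀ k, 0 ≤ t k)
    (hTint : (interior T).Nonempty)
    (a : Fin p → ℝ)
    (X : Set (Fin p → ℝ))
    (hX : X = {x | ∃ t ∈ T, ∀ k, x ⬝ᵥ (Tm k) *ᵥ x ≤ t k}) :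
    sSup {r | ∃ x ∈ X, r = a ⬝ᵥ x} =
      sInf {r | ∃ (lam : Fin K → ℝ) (υ : ℝ), (∀ k, 0 ≤ lam k) ∧
        (Matrix.fromBlocks
            (fun _ _ => υ : Matrix (Fin 1) (Fin 1) ℝ)
            (fun _ j => a j / 2 : Matrix (Fin 1) (Fin p) ℝ)
            (fun i _ => a i / 2 : Matrix (Fin p) (Fin 1) ℝ)
            (∑ k, lam k • Tm k)).PosSemidef ∧
        r = sSup {s | ∃ t ∈ T, s = ∑ k, lam k * t k} + υ} := by
  change X = ellitope Tm T at hX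
  subst hX
  change _ = sInf {r | ∃ (lam : Fin K → ℝ) (υ : ℝ), (∀ k, 0 ≤ lam k) ∧
    (homogenization υ a (∑ k, lam k • Tm k)).PosSemidef ∧ r = supportFunction T lam + υ}
  obtain ⟨t₀, ht₀⟩ := hTint
  have hmem₀ : 0 ∈ ellitope Tm T :=
    ⟨t₀, interior_subset ht₀, fun k => by simpa using hTnonneg t₀ (interior_subset ht₀) k⟩
  have hne : {r | ∃ x ∈ ellitope Tm T, r = a ⬝ᵥ x}.Nonempty := ⟨_, 0, hmem₀, rfl⟩
  have hbdd : BddAbove {r | ∃ x ∈ ellitope Tm T, r = a ⬝ᵥ x} := by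
    rw [setOf_exists_eq_eq_image]
    exact ((isBounded_ellitope hTsum hTcomp).isCompact_closure.bddAbove_image
      (by fun_prop)).mono (image_mono subset_closure)
  obtain ⟨lam, hlam, hL⟩ := exists_lagrange_multipliers (f := (a ⬝ᵥ ·))
    (g := fun k x => x ⬝ᵥ Tm k *ᵥ x) ((dotProductBilin ℝ ℝ a).concaveOn convex_univ)
    (fun k => (hTsd k).convexOn_dotProduct_mulVec) hTconv (x₀ := 0) (interior_subset ht₀)
    (by simpa using pos_of_mem_interior_of_forall_nonneg hTnonneg ht₀)
    fun x t ht hxt => le_csSup hbdd ⟨x, ⟨t, ht, hxt⟩, rfl⟩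
  refine (IsLeast.csInf_eq ?_).symm
  refine ⟨⟨lam, _, hlam,
    posSemidef_homogenization_of_lagrangian_le hTsd ⟨t₀, interior_subset ht₀⟩ hlam hL, by ring⟩, ?_⟩
  rintro _ ⟨lam', υ, hlam', hpsd, rfl⟩
  exact csSup_le hne fun _ ⟨x, hx, hr⟩ =>
    hr ▸ dotProduct_le_of_posSemidef_homogenization hTcomp hlam' hpsd hx

/-- For a basic ellitope `X` and a linear form `a`, the semidefinite relaxation bound is
exact: `max_{x ∈ X} aᵀx` equals the optimal value of the SDP
`min {φ_T(λ) + υ : λ ≥ 0, [[υ, aᵀ/2],[a/2, ∑_k λ_k T_k]] ⪰ 0}`. -/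
theorem stmt8 {p K : ℕ}
    (Tm : Fin K → Matrix (Fin p) (Fin p) ℝ)
    (T : Set (Fin K → ℝ))
    (hTsd : ∀ k, (Tm k).PosSemidef)
    (hTsum : (∑ k, Tm k).PosDef)
    (hTconv : Convex ℝ T) (hTcomp : IsCompact T)
    (hTnonneg : ∀ t ∈ T, ∀ k, 0 ≤ t k)
    (hTmono : ∀ t ∈ T, ∀ t' : Fin K → ℝ, (∀ k, 0 ≤ t' k) → (∀ k, t' k ≤ t k) → t' ∈ T)
    (hTint : (interior T).Nonempty)
    (a : Fin p → ℝ)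
    (X : Set (Fin p → ℝ))
    (hX : X = {x | ∃ t ∈ T, ∀ k, x ⬝ᵥ (Tm k) *ᵥ x ≤ t k}) :
    sSup {r | ∃ x ∈ X, r = a ⬝ᵥ x} =
      sInf {r | ∃ (lam : Fin K → ℝ) (υ : ℝ), (∀ k, 0 ≤ lam k) ∧
        (Matrix.fromBlocks
            (fun _ _ => υ : Matrix (Fin 1) (Fin 1) ℝ)
            (fun _ j => a j / 2 : Matrix (Fin 1) (Fin p) ℝ)
            (fun i _ => a i / 2 : Matrix (Fin p) (Fin 1) ℝ)
            (∑ k, lam k • Tm k)).PosSemidef ∧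
        r = sSup {s | ∃ t ∈ T, s = ∑ k, lam k * t k} + υ} :=
  stmt8_general Tm T hTsd hTsum hTconv hTcomp hTnonneg hTint a X hX
end

section
/- Let Q be an N×N symmetric positive semidefinite matrix with trace at most 1, and let ζ be an N-dimensional Rademacher random vector (independent entries ±1 with probability 1/2). Then E[exp(ζᵀQζ/3)] ≤ √3. -/
/-!
Diagonalize `Q = ∑ₖ λₖ uₖ uₖᵀ` with `λₖ ≥ 0`, `∑ λₖ = tr Q ≤ 1` and unit vectors `uₖ`. Convexity
of `exp`, with the missing weight `1 - ∑ λₖ` placed at `0`, gives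
`exp (θ ζᵀQζ) ≤ (1 - ∑ λₖ) + ∑ λₖ exp (θ (uₖ ⬝ ζ)²)`, so it suffices to treat a single unit
vector `v`. For that, linearize the square with a Gaussian integral,
`exp (θ s²) = (2π)^(-1/2) ∫ exp (√(2θ) s x - x²/2) dx`, average over `ζ` inside the integral
and use `cosh t ≤ exp (t²/2)`; what is left is `(2π)^(-1/2) ∫ exp (-(1 - 2θ) x²/2) dx`,
which is `1 / √(1 - 2θ)`, i.e. `√3` for `θ = 1/3`.
-/

open Matrix Real MeasureTheory Finset

theorem exp_sum_mul_le_of_sum_le_one {ι : Type*} (s : Finset ι) {w : ι → ℝ} (x : ι → ℝ)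
    (hw : ∀ i ∈ s, 0 ≤ w i) (hsum : ∑ i ∈ s, w i ≤ 1) :
    exp (∑ i ∈ s, w i * x i) ≤ (1 - ∑ i ∈ s, w i) + ∑ i ∈ s, w i * exp (x i) := by
  simpa using convexOn_exp.map_add_sum_le (q := 0) (p := x) hw (by ring)
    (fun _ _ => Set.mem_univ _) (sub_nonneg.mpr hsum) (Set.mem_univ _)

section Gaussian

theorem exp_mul_sub_sq_div_two_eq (a x : ℝ) :
    exp (a * x - x ^ 2 / 2) = exp (a ^ 2 / 2) * exp (-(1 / 2) * (x - a) ^ 2) := by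
  rw [← exp_add]
  ring_nf

theorem integrable_exp_mul_sub_sq_div_two (a : ℝ) :
    Integrable fun x : ℝ => exp (a * x - x ^ 2 / 2) := by
  simp_rw [exp_mul_sub_sq_div_two_eq a]
  exact ((integrable_exp_neg_mul_sq one_half_pos).comp_sub_right a).const_mul _

theorem integral_exp_mul_sub_sq_div_two (a : ℝ) :
    ∫ x : ℝ, exp (a * x - x ^ 2 / 2) = √(2 * π) * exp (a ^ 2 / 2) := by
  simp_rw [exp_mul_sub_sq_div_two_eq a]
  rw [integral_const_mul, integral_sub_right_eq_self (fun x => exp (-(1 / 2) * x ^ 2)),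
    integral_gaussian]
  ring_nf

end Gaussian

section Rademacher

def signVec {ι : Type*} (b : ι → Bool) : ι → ℝ := fun i => if b i then 1 else -1

variable {ι : Type*} [Fintype ι] [DecidableEq ι]

theorem sum_exp_signVec_dotProduct (a : ι → ℝ) :
    ∑ b : ι → Bool, exp (signVec b ⬝ᵥ a) = ∏ i, 2 * cosh (a i) := by
  simp only [dotProduct, exp_sum, signVec]
  rw [← Fintype.prod_sum fun i (β : Bool) => exp ((if β then 1 else -1) * a i)]
  refine prod_congr rfl fun i _ => ?_
  simp only [Fintype.sum_bool, if_true, Bool.false_eq_true, if_false, one_mul, neg_one_mul,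
    cosh_eq]
  ring

theorem sum_exp_signVec_dotProduct_le (a : ι → ℝ) :
    ∑ b : ι → Bool, exp (signVec b ⬝ᵥ a) ≤ 2 ^ Fintype.card ι * exp ((∑ i, a i ^ 2) / 2) := by
  rw [sum_exp_signVec_dotProduct, sum_div, exp_sum, ← card_univ, ← prod_const,
    ← prod_mul_distrib]
  exact prod_le_prod (fun i _ => by positivity) fun i _ =>
    mul_le_mul_of_nonneg_left (cosh_le_exp_half_sq (a i)) zero_le_two

theorem sum_exp_signVec_dotProduct_mul_sub_sq_le {θ : ℝ} {v : ι → ℝ} (hθ₀ : 0 ≤ θ)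
    (hv : ∑ i, v i ^ 2 ≤ 1) (x : ℝ) :
    ∑ b : ι → Bool, exp (√(2 * θ) * (signVec b ⬝ᵥ v) * x - x ^ 2 / 2)
      ≤ 2 ^ Fintype.card ι * exp (-((1 - 2 * θ) / 2) * x ^ 2) := by
  have hc : √(2 * θ) ^ 2 = 2 * θ := sq_sqrt (by positivity)
  calc ∑ b : ι → Bool, exp (√(2 * θ) * (signVec b ⬝ᵥ v) * x - x ^ 2 / 2)
      = exp (-x ^ 2 / 2) * ∑ b : ι → Bool, exp (signVec b ⬝ᵥ (√(2 * θ) * x) • v) := by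
        rw [mul_sum]
        refine sum_congr rfl fun b _ => ?_
        rw [← exp_add, dotProduct_smul, smul_eq_mul]
        ring_nf
    _ ≤ exp (-x ^ 2 / 2) *
          (2 ^ Fintype.card ι * exp ((∑ i, ((√(2 * θ) * x) • v) i ^ 2) / 2)) := by
        gcongr
        exact sum_exp_signVec_dotProduct_le _
    _ ≤ 2 ^ Fintype.card ι * exp (-((1 - 2 * θ) / 2) * x ^ 2) := by
        rw [mul_left_comm, ← exp_add]
        gcongr
        simp only [Pi.smul_apply, smul_eq_mul, mul_pow, hc, ← mul_sum]
        nlinarith [mul_le_mul_of_nonneg_left hv (by positivity : 0 ≤ θ * x ^ 2)]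

theorem sum_exp_mul_sq_signVec_dotProduct_le {θ : ℝ} {v : ι → ℝ} (hθ₀ : 0 ≤ θ)
    (hθ : θ < 1 / 2) (hv : ∑ i, v i ^ 2 ≤ 1) :
    ∑ b : ι → Bool, exp (θ * (signVec b ⬝ᵥ v) ^ 2) ≤ 2 ^ Fintype.card ι / √(1 - 2 * θ) := by
  have hc : √(2 * θ) ^ 2 = 2 * θ := sq_sqrt (by positivity)
  have h2π : 0 < √(2 * π) := by positivity
  have hlin (s : ℝ) :
      exp (θ * s ^ 2) = (√(2 * π))⁻¹ * ∫ x, exp (√(2 * θ) * s * x - x ^ 2 / 2) := by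
    rw [integral_exp_mul_sub_sq_div_two, inv_mul_cancel_left₀ h2π.ne', mul_pow, hc]
    ring_nf
  calc ∑ b : ι → Bool, exp (θ * (signVec b ⬝ᵥ v) ^ 2)
      = (√(2 * π))⁻¹ *
          ∫ x, ∑ b : ι → Bool, exp (√(2 * θ) * (signVec b ⬝ᵥ v) * x - x ^ 2 / 2) := by
        simp_rw [hlin]
        rw [← mul_sum, integral_finsetSum _ fun b _ => integrable_exp_mul_sub_sq_div_two _]
    _ ≤ (√(2 * π))⁻¹ * ∫ x, 2 ^ Fintype.card ι * exp (-((1 - 2 * θ) / 2) * x ^ 2) := by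
        refine mul_le_mul_of_nonneg_left (integral_mono
          (integrable_finsetSum _ fun b _ => integrable_exp_mul_sub_sq_div_two _)
          ((integrable_exp_neg_mul_sq (by linarith)).const_mul _)
          (sum_exp_signVec_dotProduct_mul_sub_sq_le hθ₀ hv)) (by positivity)
    _ = 2 ^ Fintype.card ι / √(1 - 2 * θ) := by
        rw [integral_const_mul, integral_gaussian, div_div_eq_mul_div,
          sqrt_div' _ (by linarith), mul_comm π]
        field_simp

end Rademacher

section Spectral

variable {n : Type*} [Fintype n] [DecidableEq n] {Q : Matrix n n ℝ}

theorem Matrix.IsHermitian.dotProduct_mulVec_eq_sum_eigenvalues (hQ : Q.IsHermitian)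
    (z : n → ℝ) :
    z ⬝ᵥ Q *ᵥ z = ∑ k, hQ.eigenvalues k * (z ⬝ᵥ ⇑(hQ.eigenvectorBasis k)) ^ 2 := by
  have hz : z ᵥ* (hQ.eigenvectorUnitary : Matrix n n ℝ) =
      fun k => z ⬝ᵥ ⇑(hQ.eigenvectorBasis k) := by
    ext k
    simp [vecMul, dotProduct]
  conv_lhs => rw [hQ.spectral_theorem]
  rw [Unitary.conjStarAlgAut_apply, ← mulVec_mulVec, ← mulVec_mulVec, dotProduct_mulVec,
    dotProduct_mulVec, star_eq_conjTranspose, conjTranspose_eq_transpose_of_trivial,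
    mulVec_transpose, hz]
  simp only [dotProduct, vecMul_diagonal, Function.comp_apply, RCLike.ofReal_real_eq_id, id]
  exact sum_congr rfl fun k _ => by ring

theorem Matrix.IsHermitian.sum_sq_eigenvectorBasis (hQ : Q.IsHermitian) (k : n) :
    ∑ i, hQ.eigenvectorBasis k i ^ 2 = 1 := by
  have := hQ.eigenvectorBasis.norm_eq_one k
  rw [EuclideanSpace.norm_eq, sqrt_eq_one] at this
  simpa using this

theorem sum_exp_mul_signVec_dotProduct_mulVec_le (hQ : Q.PosSemidef) (htr : Q.trace ≤ 1)
    {θ : ℝ} (hθ₀ : 0 ≤ θ) (hθ : θ < 1 / 2) :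
    ∑ b : n → Bool, exp (θ * (signVec b ⬝ᵥ Q *ᵥ signVec b))
      ≤ 2 ^ Fintype.card n / √(1 - 2 * θ) := by
  set μ := hQ.isHermitian.eigenvalues
  set u := hQ.isHermitian.eigenvectorBasis
  have hμ : ∀ k, 0 ≤ μ k := hQ.eigenvalues_nonneg
  have hsum : ∑ k, μ k ≤ 1 := by simpa [hQ.isHermitian.trace_eq_sum_eigenvalues] using htr
  have hjensen (b : n → Bool) : exp (θ * (signVec b ⬝ᵥ Q *ᵥ signVec b)) ≤
      (1 - ∑ k, μ k) + ∑ k, μ k * exp (θ * (signVec b ⬝ᵥ ⇑(u k)) ^ 2) := by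
    rw [hQ.isHermitian.dotProduct_mulVec_eq_sum_eigenvalues, mul_sum]
    simpa only [mul_left_comm θ, mul_assoc] using
      exp_sum_mul_le_of_sum_le_one univ _ (fun k _ => hμ k) hsum
  have hone : (2 : ℝ) ^ Fintype.card n ≤ 2 ^ Fintype.card n / √(1 - 2 * θ) :=
    le_div_self (by positivity) (sqrt_pos.mpr (by linarith)) (sqrt_le_one.mpr (by linarith))
  calc ∑ b : n → Bool, exp (θ * (signVec b ⬝ᵥ Q *ᵥ signVec b))
      ≤ ∑ b : n → Bool, ((1 - ∑ k, μ k) + ∑ k, μ k * exp (θ * (signVec b ⬝ᵥ ⇑(u k)) ^ 2)) :=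
        sum_le_sum fun b _ => hjensen b
    _ = 2 ^ Fintype.card n * (1 - ∑ k, μ k) +
          ∑ k, μ k * ∑ b : n → Bool, exp (θ * (signVec b ⬝ᵥ ⇑(u k)) ^ 2) := by
        rw [sum_add_distrib, sum_const, card_univ, Fintype.card_fun, Fintype.card_bool,
          nsmul_eq_mul, sum_comm]
        simp only [mul_sum]
        push_cast
        rfl
    _ ≤ 2 ^ Fintype.card n * (1 - ∑ k, μ k) +
          ∑ k, μ k * (2 ^ Fintype.card n / √(1 - 2 * θ)) := by
        gcongr with k
        · exact hμ k
        · exact sum_exp_mul_sq_signVec_dotProduct_le hθ₀ hθ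
            (hQ.isHermitian.sum_sq_eigenvectorBasis k).le
    _ ≤ 2 ^ Fintype.card n / √(1 - 2 * θ) := by
        rw [← sum_mul]
        nlinarith [mul_le_mul_of_nonneg_right hone (sub_nonneg.mpr hsum)]

end Spectral

/-- If `Q ⪰ 0` with `Tr Q ≤ 1` and `ζ` is an `N`-dimensional Rademacher vector, then
`E[exp(ζᵀQζ/3)] ≤ √3`. The expectation is written as a uniform average over the `2^N` sign
vectors. -/
theorem stmt9 {N : ℕ} (Q : Matrix (Fin N) (Fin N) ℝ)
    (hQ : Q.PosSemidef) (htr : Q.trace ≤ 1) :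
    (∑ b : Fin N → Bool,
        Real.exp ((fun i => if b i then (1 : ℝ) else -1) ⬝ᵥ
          Q *ᵥ (fun i => if b i then (1 : ℝ) else -1) / 3)) / 2 ^ N
      ≤ Real.sqrt 3 := by
  have h := sum_exp_mul_signVec_dotProduct_mulVec_le hQ htr (θ := 1 / 3) (by norm_num)
    (by norm_num)
  rw [div_le_iff₀' (by positivity)]
  refine (Eq.trans_le ?_ h).trans_eq ?_
  · exact sum_congr rfl fun b _ => by rw [one_div, inv_mul_eq_div]; rfl
  · rw [Fintype.card_fin]
    norm_num
end

section
/- A block matrix [[P, Q],[Qᵀ, R]] with P ∈ Sᵖ and R ∈ Sʳ is positive semidefinite if and only if P ⪰ 0, R ⪰ 0, and there exists a p×r matrix Y with YᵀY ⪯ I_r such that Q = P^{1/2} Y R^{1/2}. -/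
open Matrix

open scoped ComplexOrder in
/-- The positive semidefinite square root, as defined in the older Mathlib
(removed since): `U * diagonal (√ ∘ eigenvalues) * U⋆`. -/
noncomputable def Matrix.PosSemidef.sqrt {n 𝕜 : Type*} [Fintype n] [RCLike 𝕜] [DecidableEq n]
    {A : Matrix n n 𝕜} (hA : A.PosSemidef) : Matrix n n 𝕜 :=
  hA.1.eigenvectorUnitary.1 * diagonal ((↑) ∘ (fun i => Real.sqrt (hA.1.eigenvalues i))) *
    (star hA.1.eigenvectorUnitary : Matrix n n 𝕜)

/-!
Write `P = S²`, `R = T²` with `S, T` Hermitian. If `Q = S Y T`, the block matrix `[[P, Q], [Qᴴ, R]]`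
is the congruence `diag(S, T) [[1, Y], [Yᴴ, 1]] diag(S, T)`, and by the Schur complement
`[[1, Y], [Yᴴ, 1]] ⪰ 0` iff `YᴴY ⪯ 1`. Conversely, for a positive semidefinite block matrix take
`Y = S⁺ Q T⁺`, where `S⁺` and `T⁺` are the functional-calculus images of `x ↦ x⁻¹` (with
`0⁻¹ = 0`, so these are pseudo-inverses). Positivity forces `ker P ⊆ ker Qᴴ` and `ker R ⊆ ker Q`,
which gives `S Y T = Q`. Since `S⁺PS⁺` and `T⁺RT⁺` are orthogonal projections, adding
`diag(1 - S⁺PS⁺, 1 - T⁺RT⁺) ⪰ 0` to the congruence of the block matrix by `diag(S⁺, T⁺)` shows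
`[[1, Y], [Yᴴ, 1]] ⪰ 0`.
-/

open scoped ComplexOrder

namespace Matrix

variable {k l m n 𝕜 : Type*}

section Blocks

variable {R : Type*} [Ring R] [PartialOrder R] [StarRing R]

theorem PosSemidef.fromBlocks_swap {A : Matrix m m R} {B : Matrix m n R} {C : Matrix n m R}
    {D : Matrix n n R} (hM : (fromBlocks A B C D).PosSemidef) :
    (fromBlocks D C B A).PosSemidef := by
  simpa only [fromBlocks_submatrix_sum_swap_sum_swap] using hM.submatrix Sum.swap

theorem PosSemidef.fromBlocks_zero [Fintype m] [Fintype n] [StarOrderedRing R]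
    {A : Matrix m m R} {D : Matrix n n R} (hA : A.PosSemidef) (hD : D.PosSemidef) :
    (fromBlocks A 0 0 D).PosSemidef := by
  refine .of_dotProduct_mulVec_nonneg (hA.1.fromBlocks (by simp) hD.1) fun x => ?_
  rw [← Sum.elim_comp_inl_inr x, fromBlocks_mulVec]
  simpa [dotProduct, Fintype.sum_sum_type] using add_nonneg
    (hA.dotProduct_mulVec_nonneg (x ∘ Sum.inl)) (hD.dotProduct_mulVec_nonneg (x ∘ Sum.inr))

theorem PosSemidef.fromBlocks_conj [Fintype m] [Fintype n] [Finite k] [Finite l]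
    {P : Matrix m m R} {Q : Matrix m n R} {S : Matrix n n R}
    (hM : (fromBlocks P Q Qᴴ S).PosSemidef) (A : Matrix k m R) (D : Matrix l n R) :
    (fromBlocks (A * P * Aᴴ) (A * Q * Dᴴ) (A * Q * Dᴴ)ᴴ (D * S * Dᴴ)).PosSemidef := by
  simpa [fromBlocks_conjTranspose, fromBlocks_multiply, Matrix.mul_assoc] using
    hM.mul_mul_conjTranspose_same (fromBlocks A 0 0 D)

end Blocks

variable [RCLike 𝕜]

theorem posSemidef_fromBlocks_one_iff [Fintype m] [Finite n] [DecidableEq m] [DecidableEq n]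
    (Y : Matrix m n 𝕜) : (fromBlocks 1 Y Yᴴ 1).PosSemidef ↔ (1 - Yᴴ * Y).PosSemidef := by
  let _ : Invertible (1 : Matrix m m 𝕜) := invertibleOne
  simpa using PosDef.fromBlocks₁₁ Y 1 PosDef.one

theorem PosSemidef.conjTranspose_mul_eq_zero [Fintype m] [Fintype n] [Fintype l]
    {P : Matrix m m 𝕜} {Q : Matrix m n 𝕜} {R : Matrix n n 𝕜}
    (hM : (fromBlocks P Q Qᴴ R).PosSemidef) {K : Matrix m l 𝕜} (hK : P * K = 0) :
    Qᴴ * K = 0 := by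
  refine ext_iff_mulVec.2 fun v => ?_
  have hPu : P *ᵥ (K *ᵥ v) = 0 := by rw [mulVec_mulVec, hK, zero_mulVec]
  have hMu : fromBlocks P Q Qᴴ R *ᵥ Sum.elim (K *ᵥ v) 0 = 0 :=
    (hM.dotProduct_mulVec_zero_iff _).1 <| by
      simp [fromBlocks_mulVec, hPu, dotProduct, Fintype.sum_sum_type]
  rw [zero_mulVec, ← mulVec_mulVec]
  simpa [fromBlocks_mulVec] using congrArg (· ∘ Sum.inr) hMu

section PseudoInverse

variable [Fintype n] [DecidableEq n] {S : Matrix n n 𝕜}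

theorem continuousOn_spectrum (f : ℝ → ℝ) (S : Matrix n n 𝕜) : ContinuousOn f (spectrum ℝ S) :=
  S.finite_real_spectrum.continuousOn f

theorem IsHermitian.mul_cfc_inv_mul_self (hS : S.IsHermitian) :
    S * cfc (·⁻¹ : ℝ → ℝ) S * S = S := by
  have hc := continuousOn_spectrum (S := S)
  calc S * cfc (·⁻¹ : ℝ → ℝ) S * S = cfc (fun x : ℝ => x * x⁻¹ * x) S := by
        rw [cfc_mul _ _ _ (hc _) (hc _), cfc_mul _ _ _ (hc _) (hc _), cfc_id' ℝ S]
    _ = S := by simp only [mul_inv_mul_cancel, cfc_id' ℝ S]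

open scoped MatrixOrder in
theorem IsHermitian.posSemidef_one_sub_cfc_inv_mul (hS : S.IsHermitian) :
    (1 - cfc (·⁻¹ : ℝ → ℝ) S * (S * S) * cfc (·⁻¹ : ℝ → ℝ) S).PosSemidef := by
  have hc := continuousOn_spectrum (S := S)
  have : 1 - cfc (·⁻¹ : ℝ → ℝ) S * (S * S) * cfc (·⁻¹ : ℝ → ℝ) S
      = cfc (fun x : ℝ => 1 - x⁻¹ * (x * x) * x⁻¹) S := by
    rw [cfc_sub _ _ _ (hc _) (hc _), cfc_const_one ℝ S, cfc_mul _ _ _ (hc _) (hc _),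
      cfc_mul _ _ _ (hc _) (hc _), cfc_mul _ _ _ (hc _) (hc _), cfc_id' ℝ S]
  rw [this, ← nonneg_iff_posSemidef]
  refine cfc_nonneg fun x _ => ?_
  rcases eq_or_ne x 0 with rfl | hx <;> simp [*]

theorem IsHermitian.exists_generalized_inverse (hS : S.IsHermitian) :
    ∃ S' : Matrix n n 𝕜,
      S'.IsHermitian ∧ S * S' * S = S ∧ (1 - S' * (S * S) * S').PosSemidef :=
  ⟨_, cfc_predicate _ _, hS.mul_cfc_inv_mul_self, hS.posSemidef_one_sub_cfc_inv_mul⟩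

end PseudoInverse

section Sqrt

variable [Fintype n] [DecidableEq n] {A : Matrix n n 𝕜}

theorem PosSemidef.sqrt_eq_cfc (hA : A.PosSemidef) : hA.sqrt = cfc Real.sqrt A := by
  rw [hA.1.cfc_eq]
  rfl

open scoped MatrixOrder in
theorem PosSemidef.sqrt_mul_sqrt (hA : A.PosSemidef) : hA.sqrt * hA.sqrt = A := by
  rw [hA.sqrt_eq_cfc, ← cfc_mul Real.sqrt Real.sqrt A]
  conv_rhs => rw [← cfc_id' ℝ A]
  exact cfc_congr fun x hx => Real.mul_self_sqrt (spectrum_nonneg_of_nonneg hA.nonneg hx)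

theorem PosSemidef.isHermitian_sqrt (hA : A.PosSemidef) : hA.sqrt.IsHermitian := by
  rw [hA.sqrt_eq_cfc]
  exact cfc_predicate _ _

end Sqrt

section Factorization

variable [Fintype m] [Fintype n] [DecidableEq m] [DecidableEq n]
  {S : Matrix m m 𝕜} {T : Matrix n n 𝕜} {Q : Matrix m n 𝕜}

theorem exists_contraction_of_posSemidef_fromBlocks (hS : S.IsHermitian) (hT : T.IsHermitian)
    (hM : (fromBlocks (S * S) Q Qᴴ (T * T)).PosSemidef) :
    ∃ Y : Matrix m n 𝕜, (1 - Yᴴ * Y).PosSemidef ∧ Q = S * Y * T := by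
  obtain ⟨S', hS', hSS'S, hS'S⟩ := hS.exists_generalized_inverse
  obtain ⟨T', hT', hTT'T, hT'T⟩ := hT.exists_generalized_inverse
  have hQS : S * S' * Q = Q := by
    have h : Qᴴ * (1 - S' * S) = 0 := hM.conjTranspose_mul_eq_zero <| by
      rw [Matrix.mul_sub, Matrix.mul_one, Matrix.mul_assoc S S, ← Matrix.mul_assoc S S', hSS'S,
        sub_self]
    have h' : (1 - S * S') * Q = 0 := by
      simpa [conjTranspose_mul, hS.eq, hS'.eq] using congrArg conjTranspose h
    rwa [Matrix.sub_mul, Matrix.one_mul, sub_eq_zero, eq_comm] at h'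
  have hQT : Q * (T' * T) = Q := by
    have hM' : (fromBlocks (T * T) Qᴴ Qᴴᴴ (S * S)).PosSemidef := by
      rw [conjTranspose_conjTranspose]
      exact hM.fromBlocks_swap
    have h : Qᴴᴴ * (1 - T' * T) = 0 := hM'.conjTranspose_mul_eq_zero <| by
      rw [Matrix.mul_sub, Matrix.mul_one, Matrix.mul_assoc T T, ← Matrix.mul_assoc T T', hTT'T,
        sub_self]
    rwa [conjTranspose_conjTranspose, Matrix.mul_sub, Matrix.mul_one, sub_eq_zero, eq_comm] at h
  refine ⟨S' * Q * T', ?_, ?_⟩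
  · rw [← posSemidef_fromBlocks_one_iff]
    have h := (hM.fromBlocks_conj S' T').add (hS'S.fromBlocks_zero hT'T)
    simpa [fromBlocks_add, hS'.eq, hT'.eq] using h
  · calc Q = S * S' * Q * (T' * T) := by rw [hQS, hQT]
      _ = S * (S' * Q * T') * T := by simp only [Matrix.mul_assoc]

theorem posSemidef_fromBlocks_mul_self_iff (hS : S.IsHermitian) (hT : T.IsHermitian) :
    (fromBlocks (S * S) Q Qᴴ (T * T)).PosSemidef ↔
      ∃ Y : Matrix m n 𝕜, (1 - Yᴴ * Y).PosSemidef ∧ Q = S * Y * T := by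
  refine ⟨exists_contraction_of_posSemidef_fromBlocks hS hT, ?_⟩
  rintro ⟨Y, hY, rfl⟩
  simpa [hS.eq, hT.eq] using ((posSemidef_fromBlocks_one_iff Y).2 hY).fromBlocks_conj S T

end Factorization

end Matrix

theorem stmt14_general {p r : ℕ}
    (P : Matrix (Fin p) (Fin p) ℝ) (R : Matrix (Fin r) (Fin r) ℝ)
    (Q : Matrix (Fin p) (Fin r) ℝ) :
    (Matrix.fromBlocks P Q Qᵀ R).PosSemidef ↔
      ∃ (hP : P.PosSemidef) (hR : R.PosSemidef) (Y : Matrix (Fin p) (Fin r) ℝ),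
        (1 - Yᵀ * Y).PosSemidef ∧ Q = hP.sqrt * Y * hR.sqrt := by
  simp only [← conjTranspose_eq_transpose_of_trivial]
  constructor
  · intro hM
    have hP : P.PosSemidef := hM.submatrix Sum.inl
    have hR : R.PosSemidef := hM.submatrix Sum.inr
    rw [← hP.sqrt_mul_sqrt, ← hR.sqrt_mul_sqrt,
      posSemidef_fromBlocks_mul_self_iff hP.isHermitian_sqrt hR.isHermitian_sqrt] at hM
    exact ⟨hP, hR, hM⟩
  · rintro ⟨hP, hR, hY⟩
    rw [← hP.sqrt_mul_sqrt, ← hR.sqrt_mul_sqrt,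
      posSemidef_fromBlocks_mul_self_iff hP.isHermitian_sqrt hR.isHermitian_sqrt]
    exact hY

/-- A symmetric block matrix `[[P, Q],[Qᵀ, R]]` is positive semidefinite iff `P ⪰ 0`,
`R ⪰ 0`, and `Q = P^{1/2} Y R^{1/2}` for some `Y` with `YᵀY ⪯ I`. -/
theorem stmt14 {p r : ℕ}
    (P : Matrix (Fin p) (Fin p) ℝ) (R : Matrix (Fin r) (Fin r) ℝ)
    (Q : Matrix (Fin p) (Fin r) ℝ)
    (hPs : P.IsSymm) (hRs : R.IsSymm) :
    (Matrix.fromBlocks P Q Qᵀ R).PosSemidef ↔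
      ∃ (hP : P.PosSemidef) (hR : R.PosSemidef) (Y : Matrix (Fin p) (Fin r) ℝ),
        (1 - Yᵀ * Y).PosSemidef ∧ Q = hP.sqrt * Y * hR.sqrt :=
  stmt14_general P R Q
end
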